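/- Let a_n = (2n-1)!! be the double factorial of odd numbers (so a_0 = 1 and a_{n+1}/a_n = 2n+1), viewed as a real number. Then for every n ≥ 0, the polynomial p_n(x) = a_0 + a_1 x + ... + a_n x^n has exactly n mod 2 real roots counted with multiplicity. -/

import Mathlib

open Polynomial

/-- The double factorial of odd numbers: `oddDoubleFactorial n = (2n-1)!!`,
with `oddDoubleFactorial 0 = 1` and `oddDoubleFactorial (n+1) = (2n+1) * oddDoubleFactorial n`. -/
def oddDoubleFactorial : ℕ → ℕ
  | 0 => 1
  | n + 1 => (2 * n + 1) * oddDoubleFactorial n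

namespace Stmt11Aux

noncomputable def a (n : ℕ) : ℝ := (oddDoubleFactorial n : ℝ)

lemma a_zero : a 0 = 1 := by simp [a, oddDoubleFactorial]

lemma a_succ (n : ℕ) : a (n + 1) = (2 * (n : ℝ) + 1) * a n := by
  simp only [a, oddDoubleFactorial]
  push_cast
  ring

lemma a_pos (n : ℕ) : 0 < a n := by
  induction n with
  | zero => rw [a_zero]; norm_num
  | succ n ih =>
      rw [a_succ]
      have : (0:ℝ) ≤ (n:ℝ) := Nat.cast_nonneg n
      nlinarith

/-- evaluation of the partial sum polynomial -/
noncomputable def f (n : ℕ) (x : ℝ) : ℝ := ∑ i ∈ Finset.range (n + 1), a i * x ^ i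

/-- evaluation of its derivative -/
noncomputable def g (n : ℕ) (x : ℝ) : ℝ :=
  ∑ j ∈ Finset.range n, ((j : ℝ) + 1) * a (j + 1) * x ^ j

lemma quad_nonneg {A B C x : ℝ} (hA : 0 < A) (hB2 : B ^ 2 ≤ A * C) :
    0 ≤ A / 2 + B * x + C / 2 * x ^ 2 := by
  nlinarith [sq_nonneg (A + B * x), sq_nonneg x, sq_nonneg (B * x)]

lemma term_nonneg {A B C : ℝ} (m : ℕ) (x : ℝ) (hA : 0 < A) (hB2 : B ^ 2 ≤ A * C) :
    0 ≤ A / 2 * x ^ (2 * m) + B * x ^ (2 * m + 1) + C / 2 * x ^ (2 * m + 2) := by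
  have h1 : A / 2 * x ^ (2 * m) + B * x ^ (2 * m + 1) + C / 2 * x ^ (2 * m + 2)
      = x ^ (2 * m) * (A / 2 + B * x + C / 2 * x ^ 2) := by ring
  rw [h1]
  have h2 : (0:ℝ) ≤ x ^ (2 * m) := by
    have : x ^ (2 * m) = (x ^ m) ^ 2 := by rw [← pow_mul, mul_comm]
    rw [this]; positivity
  exact mul_nonneg h2 (quad_nonneg hA hB2)

lemma claim_even (k : ℕ) (x : ℝ) :
    1 + x + 3 / 2 * x ^ 2 + a (2 * k + 2) / 2 * x ^ (2 * k + 2) ≤ f (2 * k + 2) x := by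
  induction k with
  | zero =>
      have ha1 : a 1 = 1 := by simp [a, show oddDoubleFactorial 1 = 1 from rfl]
      have ha2 : a 2 = 3 := by simp [a, show oddDoubleFactorial 2 = 3 from rfl]
      simp only [f, Finset.sum_range_succ, Finset.sum_range_one, a_zero, ha1, ha2]
      norm_num
      nlinarith [sq_nonneg x]
  | succ k ih =>
      have hsum : f (2 * (k + 1) + 2) x
          = f (2 * k + 2) x + a (2 * k + 3) * x ^ (2 * k + 3)
            + a (2 * k + 4) * x ^ (2 * k + 4) := by
        have h1 : 2 * (k + 1) + 2 + 1 = (2 * k + 3) + 1 + 1 := by ring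
        simp only [f, h1, Finset.sum_range_succ]
      have hB2 : (a (2 * k + 3)) ^ 2 ≤ a (2 * k + 2) * a (2 * k + 4) := by
        have h3 : a (2 * k + 3) = (2 * ((2:ℝ) * k + 2) + 1) * a (2 * k + 2) := by
          have := a_succ (2 * k + 2); push_cast at this ⊢; convert this using 3 <;> ring
        have h4 : a (2 * k + 4) = (2 * ((2:ℝ) * k + 3) + 1) * a (2 * k + 3) := by
          have := a_succ (2 * k + 3); push_cast at this ⊢; convert this using 3 <;> ring
        have hp := a_pos (2 * k + 2)
        have hk : (0:ℝ) ≤ (k:ℝ) := Nat.cast_nonneg k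
        rw [h3, h4, h3]
        nlinarith [sq_nonneg (a (2 * k + 2)), mul_pos hp hp]
      have hterm : 0 ≤ a (2 * k + 2) / 2 * x ^ (2 * (k + 1)) + a (2 * k + 3) * x ^ (2 * (k + 1) + 1)
          + a (2 * k + 4) / 2 * x ^ (2 * (k + 1) + 2) :=
        term_nonneg (k + 1) x (a_pos _) hB2
      have e1 : 2 * (k + 1) = 2 * k + 2 := by ring
      have e2 : 2 * (k + 1) + 1 = 2 * k + 3 := by ring
      have e3 : 2 * (k + 1) + 2 = 2 * k + 4 := by ring
      rw [e2, e3, e1] at hterm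
      rw [hsum, e3]
      linarith

lemma even_pos (k : ℕ) (x : ℝ) : 0 < f (2 * k) x := by
  cases k with
  | zero => simp [f, Finset.sum_range_one, a_zero]
  | succ k =>
      have h := claim_even k x
      have h2 : 0 ≤ a (2 * k + 2) / 2 * x ^ (2 * k + 2) := by
        have hx : (0:ℝ) ≤ x ^ (2 * k + 2) := by
          have : x ^ (2 * k + 2) = (x ^ (k + 1)) ^ 2 := by rw [← pow_mul]; ring_nf
          rw [this]; positivity
        have := (a_pos (2 * k + 2)).le
        positivity
      have h3 : (0:ℝ) < 1 + x + 3 / 2 * x ^ 2 := by nlinarith [sq_nonneg (3 * x + 1)]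
      have e : 2 * (k + 1) = 2 * k + 2 := by ring
      rw [e]
      linarith

lemma claim_odd (k : ℕ) (x : ℝ) :
    1 + 6 * x + 45 / 2 * x ^ 2 + ((2 * (k:ℝ) + 3) * a (2 * k + 3)) / 2 * x ^ (2 * k + 2)
      ≤ g (2 * k + 3) x := by
  induction k with
  | zero =>
      have ha1 : a 1 = 1 := by simp [a, show oddDoubleFactorial 1 = 1 from rfl]
      have ha2 : a 2 = 3 := by simp [a, show oddDoubleFactorial 2 = 3 from rfl]
      have ha3 : a 3 = 15 := by simp [a, show oddDoubleFactorial 3 = 15 from rfl]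
      simp only [g, Finset.sum_range_succ, Finset.sum_range_one, ha1, ha2, ha3]
      norm_num
      nlinarith [sq_nonneg x]
  | succ k ih =>
      have hsum : g (2 * (k + 1) + 3) x
          = g (2 * k + 3) x + ((2 * (k:ℝ) + 4)) * a (2 * k + 4) * x ^ (2 * k + 3)
            + ((2 * (k:ℝ) + 5)) * a (2 * k + 5) * x ^ (2 * k + 4) := by
        have h1 : 2 * (k + 1) + 3 = (2 * k + 3) + 1 + 1 := by ring
        simp only [g, h1, Finset.sum_range_succ]
        push_cast
        ring
      have h3 : a (2 * k + 4) = (2 * ((2:ℝ) * k + 3) + 1) * a (2 * k + 3) := by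
        have := a_succ (2 * k + 3); push_cast at this ⊢; convert this using 3 <;> ring
      have h4 : a (2 * k + 5) = (2 * ((2:ℝ) * k + 4) + 1) * a (2 * k + 4) := by
        have := a_succ (2 * k + 4); push_cast at this ⊢; convert this using 3 <;> ring
      have hp := a_pos (2 * k + 3)
      have hk : (0:ℝ) ≤ (k:ℝ) := Nat.cast_nonneg k
      have hB2 : ((2 * (k:ℝ) + 4) * a (2 * k + 4)) ^ 2
          ≤ ((2 * (k:ℝ) + 3) * a (2 * k + 3)) * ((2 * (k:ℝ) + 5) * a (2 * k + 5)) := by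
        rw [h4, h3]
        nlinarith [sq_nonneg (a (2 * k + 3)), mul_pos hp hp,
          mul_nonneg (mul_nonneg hk hk) (sq_nonneg (a (2 * k + 3))),
          mul_nonneg hk (sq_nonneg (a (2 * k + 3)))]
      have hApos : 0 < (2 * (k:ℝ) + 3) * a (2 * k + 3) := by positivity
      have hterm : 0 ≤ ((2 * (k:ℝ) + 3) * a (2 * k + 3)) / 2 * x ^ (2 * (k + 1))
          + ((2 * (k:ℝ) + 4) * a (2 * k + 4)) * x ^ (2 * (k + 1) + 1)
          + ((2 * (k:ℝ) + 5) * a (2 * k + 5)) / 2 * x ^ (2 * (k + 1) + 2) :=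
        term_nonneg (k + 1) x hApos hB2
      have e1 : 2 * (k + 1) = 2 * k + 2 := by ring
      have e2 : 2 * (k + 1) + 1 = 2 * k + 3 := by ring
      have e3 : 2 * (k + 1) + 2 = 2 * k + 4 := by ring
      have i1 : 2 * (k + 1) + 3 = 2 * k + 5 := by ring
      rw [e2, e3, e1] at hterm
      rw [i1] at hsum
      rw [i1, e3]
      push_cast
      linarith [hsum, ih, hterm]

lemma g_pos (k : ℕ) (x : ℝ) : 0 < g (2 * k + 1) x := by
  cases k with
  | zero =>
      simp [g, Finset.sum_range_one, a_succ 0, a_zero]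
  | succ k =>
      have h := claim_odd k x
      have e : 2 * (k + 1) + 1 = 2 * k + 3 := by ring
      rw [e]
      have h2 : 0 ≤ ((2 * (k:ℝ) + 3) * a (2 * k + 3)) / 2 * x ^ (2 * k + 2) := by
        have hx : (0:ℝ) ≤ x ^ (2 * k + 2) := by
          have : x ^ (2 * k + 2) = (x ^ (k + 1)) ^ 2 := by rw [← pow_mul]; ring_nf
          rw [this]; positivity
        have := (a_pos (2 * k + 3)).le
        have hk : (0:ℝ) ≤ (k:ℝ) := Nat.cast_nonneg k
        positivity
      have h3 : (0:ℝ) < 1 + 6 * x + 45 / 2 * x ^ 2 := by nlinarith [sq_nonneg (15 * x + 2)]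
      linarith

noncomputable def P (n : ℕ) : Polynomial ℝ :=
  ∑ i ∈ Finset.range (n + 1), C ((oddDoubleFactorial i : ℝ)) * X ^ i

lemma eval_P (n : ℕ) (x : ℝ) : (P n).eval x = f n x := by
  simp [P, f, a, eval_finset_sum]

lemma deriv_P (n : ℕ) (x : ℝ) : (P n).derivative.eval x = g n x := by
  rw [P, derivative_sum]
  simp only [derivative_C_mul_X_pow, eval_finset_sum, eval_mul, eval_C, eval_pow, eval_X]
  rw [Finset.sum_range_succ']
  simp only [Nat.cast_zero, mul_zero, zero_mul, add_zero, Nat.add_sub_cancel]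
  rw [g]
  refine Finset.sum_congr rfl fun j hj => ?_
  push_cast [a]
  ring

lemma f_zero (n : ℕ) : f n 0 = 1 := by
  rw [f, Finset.sum_range_succ']
  simp [a_zero]

lemma f_neg_one (k : ℕ) : f (2 * k + 1) (-1) ≤ 0 := by
  induction k with
  | zero =>
      simp [f, Finset.sum_range_succ, Finset.sum_range_one, a_zero, a_succ 0]
  | succ k ih =>
      have h1 : 2 * (k + 1) + 1 + 1 = (2 * k + 2) + 1 + 1 := by ring
      have hsum : f (2 * (k + 1) + 1) (-1)
          = f (2 * k + 1) (-1) + a (2 * k + 2) * (-1:ℝ) ^ (2 * k + 2)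
            + a (2 * k + 3) * (-1:ℝ) ^ (2 * k + 3) := by
        simp only [f, h1, Finset.sum_range_succ]
      rw [hsum]
      have hpow1 : (-1:ℝ) ^ (2 * k + 2) = 1 := by
        rw [show 2 * k + 2 = 2 * (k + 1) by ring, pow_mul]; norm_num
      have hpow2 : (-1:ℝ) ^ (2 * k + 3) = -1 := by
        rw [show 2 * k + 3 = 2 * (k + 1) + 1 by ring, pow_add, pow_mul]; norm_num
      rw [hpow1, hpow2]
      have h3 : a (2 * k + 3) = (2 * ((2:ℝ) * k + 2) + 1) * a (2 * k + 2) := by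
        have := a_succ (2 * k + 2); push_cast at this ⊢; convert this using 3 <;> ring
      have hp := a_pos (2 * k + 2)
      have hk : (0:ℝ) ≤ (k:ℝ) := Nat.cast_nonneg k
      rw [h3]
      nlinarith

lemma P_ne_zero (n : ℕ) : P n ≠ 0 := by
  intro h
  have h0 : (P n).eval 0 = 1 := by rw [eval_P, f_zero]
  rw [h] at h0
  simp at h0

end Stmt11Aux

open Stmt11Aux in
theorem stmt_11 :
    ∀ n : ℕ, Multiset.card
      ((∑ i ∈ Finset.range (n + 1),
        C ((oddDoubleFactorial i : ℝ)) * X ^ i : Polynomial ℝ).roots) = n % 2 := by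
  intro n
  have hP : (∑ i ∈ Finset.range (n + 1),
      C ((oddDoubleFactorial i : ℝ)) * X ^ i : Polynomial ℝ) = P n := rfl
  rw [hP]
  rcases Nat.even_or_odd n with ⟨k, hk⟩ | ⟨k, hk⟩
  · -- even case: no roots
    subst hk
    have hmod : (k + k) % 2 = 0 := by omega
    rw [hmod, Multiset.card_eq_zero]
    refine Multiset.eq_zero_of_forall_notMem fun r hr => ?_
    rw [mem_roots'] at hr
    have hpos : 0 < (P (k + k)).eval r := by
      rw [eval_P, show k + k = 2 * k by ring]
      exact even_pos k r
    exact absurd hr.2 (ne_of_gt hpos)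
  · -- odd case: exactly one root
    subst hk
    have hmod : (2 * k + 1) % 2 = 1 := by omega
    rw [hmod]
    set p := P (2 * k + 1) with hp
    have hne : p ≠ 0 := P_ne_zero _
    -- strict monotonicity
    have hmono : StrictMono (fun x : ℝ => p.eval x) := by
      apply strictMono_of_deriv_pos
      intro x
      rw [Polynomial.deriv, deriv_P]
      exact g_pos k x
    -- existence of a root in [-1, 0]
    have hcont : ContinuousOn (fun x : ℝ => p.eval x) (Set.Icc (-1) 0) :=
      p.continuous.continuousOn
    have hIVT := intermediate_value_Icc (by norm_num : (-1:ℝ) ≤ 0) hcont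
    have h0mem : (0:ℝ) ∈ Set.Icc (p.eval (-1)) (p.eval 0) := by
      constructor
      · rw [eval_P]; exact f_neg_one k
      · rw [eval_P, f_zero]; norm_num
    obtain ⟨r, _, hr⟩ := hIVT h0mem
    have hroot : p.IsRoot r := hr
    -- root multiplicity is one
    have hderiv_ne : (derivative p).eval r ≠ 0 := by
      rw [deriv_P]
      exact ne_of_gt (g_pos k r)
    have hmult : p.rootMultiplicity r = 1 := by
      have hge : 1 ≤ p.rootMultiplicity r := (rootMultiplicity_pos hne).2 hroot
      have hle : p.rootMultiplicity r ≤ 1 := by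
        by_contra h
        push_neg at h
        have := isRoot_iterate_derivative_of_lt_rootMultiplicity h
        rw [Function.iterate_one] at this
        exact hderiv_ne this
      omega
    -- all roots equal r
    have hall : ∀ s ∈ p.roots, r = s := by
      intro s hs
      rw [mem_roots'] at hs
      have : p.eval r = p.eval s := by rw [hroot, hs.2]
      exact hmono.injective this
    rw [← Multiset.count_eq_card.mpr hall, count_roots, hmult]
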